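/- Under the hypotheses making Z/D a right triangulated category (C right triangulated satisfying Assumption 2.10, D ⊆ Z, D factor-through-epic, Z extension-closed, Z = μ(Z;D)): if μ: M → N is a D-monic morphism with M, N ∈ Z and M →μ N →γ P →φ TM is a right triangle in C, then P ∈ Z. -/

import Mathlib

/-!
Let `N ⟶ D_N ⟶ Y_N` be a `𝒟`-approximation triangle of `N`. The cone `W` of the `𝒟`-monic map
`M ⟶ D_N` lies in `𝒵`: it is a direct summand of the cone of `M ⟶ D_M ⊞ D_N`, which is an
extension of `Y_M` by a direct summand of `D_M ⊞ D_N`. The octahedron on `μ` and `N ⟶ D_N` gives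
a right triangle `P ⟶ W ⟶ Y_N` whose first map is `𝒟`-monic. Composing it with an approximation
`W ⟶ D_W` and using the octahedron once more gives a right triangle `P ⟶ D_W ⟶ E` with `E` an
extension of `Y_N` by `Y_W`, and with left and right `𝒟`-approximations as maps (the latter
because `T` is faithful by Assumption 2.10 and full on maps out of `T 𝒟`); so `P ∈ μ(𝒵; 𝒟) = 𝒵`.
-/

open CategoryTheory Limits

attribute [local instance] CategoryTheory.Limits.hasBinaryBiproducts_of_finite_biproducts

universe v u

variable (C : Type u) [Category.{v} C]

/-- A sextuple `A ⟶ B ⟶ C ⟶ TA` in a category with an endofunctor `T`. -/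
structure RightTriangle (T : C ⥤ C) where
  obj₁ : C
  obj₂ : C
  obj₃ : C
  mor₁ : obj₁ ⟶ obj₂
  mor₂ : obj₂ ⟶ obj₃
  mor₃ : obj₃ ⟶ T.obj obj₁

variable {C}

/-- An isomorphism of sextuples. -/
def RightTriangle.Iso {T : C ⥤ C} (t t' : RightTriangle C T) : Prop :=
  ∃ (a : t.obj₁ ≅ t'.obj₁) (b : t.obj₂ ≅ t'.obj₂) (c : t.obj₃ ≅ t'.obj₃),
    t.mor₁ ≫ b.hom = a.hom ≫ t'.mor₁ ∧
    t.mor₂ ≫ c.hom = b.hom ≫ t'.mor₂ ∧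
    t.mor₃ ≫ T.map a.hom = c.hom ≫ t'.mor₃

open ZeroObject in
/-- A right triangulated category structure on an additive category `C`
with shift endofunctor `T`, following Assem–Beligiannis–Marmaridis:
axioms TR(0)-TR(5). -/
structure RightTriangulated [Preadditive C] [HasZeroObject C] [HasFiniteBiproducts C]
    (T : C ⥤ C) where
  shift_additive : T.Additive
  dist : Set (RightTriangle C T)
  /-- TR(0): closed under isomorphisms -/
  tr0 : ∀ t ∈ dist, ∀ t', RightTriangle.Iso t t' → t' ∈ dist
  /-- TR(1): `0 ⟶ A ⟶ A ⟶ 0` is a right triangle -/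
  tr1 : ∀ A : C, (⟨0, A, A, 0, 𝟙 A, 0⟩ : RightTriangle C T) ∈ dist
  /-- TR(2): every morphism extends to a right triangle -/
  tr2 : ∀ {A B : C} (f : A ⟶ B), ∃ (Z : C) (g : B ⟶ Z) (h : Z ⟶ T.obj A),
    (⟨A, B, Z, f, g, h⟩ : RightTriangle C T) ∈ dist
  /-- TR(3): rotation -/
  tr3 : ∀ t ∈ dist,
    (⟨t.obj₂, t.obj₃, T.obj t.obj₁, t.mor₂, t.mor₃, -T.map t.mor₁⟩ : RightTriangle C T) ∈ dist
  /-- TR(4): completion of commutative squares to morphisms of right triangles -/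
  tr4 : ∀ t ∈ dist, ∀ t' ∈ dist, ∀ (a : t.obj₁ ⟶ t'.obj₁) (b : t.obj₂ ⟶ t'.obj₂),
    t.mor₁ ≫ b = a ≫ t'.mor₁ →
    ∃ c : t.obj₃ ⟶ t'.obj₃,
      t.mor₂ ≫ c = b ≫ t'.mor₂ ∧ t.mor₃ ≫ T.map a = c ≫ t'.mor₃
  /-- TR(5): the octahedral axiom -/
  tr5 : ∀ {X Y Z U V W : C} (a : X ⟶ Y) (b : Y ⟶ Z) (c : Z ⟶ T.obj X)
    (d : Y ⟶ U) (e : U ⟶ V) (f : V ⟶ T.obj Y) (g : U ⟶ W) (h : W ⟶ T.obj X),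
    (⟨X, Y, Z, a, b, c⟩ : RightTriangle C T) ∈ dist →
    (⟨Y, U, V, d, e, f⟩ : RightTriangle C T) ∈ dist →
    (⟨X, U, W, a ≫ d, g, h⟩ : RightTriangle C T) ∈ dist →
    ∃ (l : Z ⟶ W) (i : W ⟶ V),
      b ≫ l = d ≫ g ∧ l ≫ h = c ∧ g ≫ i = e ∧ i ≫ f = h ≫ T.map a ∧
      (⟨Z, W, V, l, i, f ≫ T.map b⟩ : RightTriangle C T) ∈ dist

/-- Assumption 2.10: the rotation axiom can be reversed. -/
def Assumption210 [Preadditive C] [HasZeroObject C] [HasFiniteBiproducts C]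
    {T : C ⥤ C} (rt : RightTriangulated T) : Prop :=
  ∀ {A B Z : C} (f : A ⟶ B) (g : B ⟶ Z) (h : Z ⟶ T.obj A),
    (⟨B, Z, T.obj A, g, h, -T.map f⟩ : RightTriangle C T) ∈ rt.dist →
    (⟨A, B, Z, f, g, h⟩ : RightTriangle C T) ∈ rt.dist

/-- A morphism factors through an object of `S`. -/
def FactorsThru (S : Set C) {X Y : C} (f : X ⟶ Y) : Prop :=
  ∃ (D : C) (_ : D ∈ S) (u : X ⟶ D) (v : D ⟶ Y), u ≫ v = f

/-- `g : X ⟶ Y` is `S`-epic. -/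
def SEpic (S : Set C) {X Y : C} (g : X ⟶ Y) : Prop :=
  ∀ D ∈ S, ∀ u : D ⟶ Y, ∃ v : D ⟶ X, v ≫ g = u

/-- `f : X ⟶ Y` is `S`-monic. -/
def SMonic (S : Set C) {X Y : C} (f : X ⟶ Y) : Prop :=
  ∀ D ∈ S, ∀ u : X ⟶ D, ∃ v : Y ⟶ D, f ≫ v = u

/-- iterate of an endofunctor. -/
def iterFun (T : C ⥤ C) : ℕ → (C ⥤ C)
  | 0 => 𝟭 C
  | n + 1 => iterFun T n ⋙ T

/-- `S` is factor-through-epic: every `f ∈ [Tⁿ S](TX, TY)` with `n > 0` is of the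
form `T f'` for some `f' ∈ [Tⁿ⁻¹ S](X, Y)`. -/
def FactorThroughEpic (T : C ⥤ C) (S : Set C) : Prop :=
  ∀ (n : ℕ) (X Y : C) (f : T.obj X ⟶ T.obj Y),
    FactorsThru ((iterFun T (n + 1)).obj '' S) f →
    ∃ f' : X ⟶ Y, FactorsThru ((iterFun T n).obj '' S) f' ∧ T.map f' = f

/-- A subcategory (given by a set of objects) closed under isomorphisms,
finite direct sums and direct summands. -/
def IsSubcat [Preadditive C] [HasFiniteBiproducts C] (S : Set C) : Prop :=
  (∀ {X Y : C}, (X ≅ Y) → X ∈ S → Y ∈ S) ∧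
  (∀ {X Y : C}, X ∈ S → Y ∈ S → (X ⊞ Y) ∈ S) ∧
  (∀ {X Y : C} (s : Y ⟶ X) (r : X ⟶ Y), s ≫ r = 𝟙 Y → X ∈ S → Y ∈ S)

section Mutation

variable [Preadditive C] [HasZeroObject C] [HasFiniteBiproducts C]
  {T : C ⥤ C} (rt : RightTriangulated T)

/-- `μ(𝒵; 𝒟)`: objects `X` that lie in `𝒟` or are the left end of a right triangle
`X ⟶ D ⟶ Y ⟶ TX` with `Y ∈ 𝒵`, `D ∈ 𝒟`, the first map a left `𝒟`-approximation and
the second a right `𝒟`-approximation. -/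
def muSet (𝒵 𝒟 : Set C) : Set C :=
  {X | X ∈ 𝒟 ∨ ∃ (D Y : C) (f : X ⟶ D) (g : D ⟶ Y) (h : Y ⟶ T.obj X),
    (⟨X, D, Y, f, g, h⟩ : RightTriangle C T) ∈ rt.dist ∧
    D ∈ 𝒟 ∧ Y ∈ 𝒵 ∧ SMonic 𝒟 f ∧ SEpic 𝒟 g}

/-- `μ⁻¹(𝒳; 𝒟)`: objects `Y` that lie in `𝒟` or are the third term of a right triangle
`X ⟶ D ⟶ Y ⟶ TX` with `X ∈ 𝒳`, `D ∈ 𝒟`, the maps being left/right `𝒟`-approximations. -/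
def muInvSet (𝒳 𝒟 : Set C) : Set C :=
  {Y | Y ∈ 𝒟 ∨ ∃ (X D : C) (f : X ⟶ D) (g : D ⟶ Y) (h : Y ⟶ T.obj X),
    (⟨X, D, Y, f, g, h⟩ : RightTriangle C T) ∈ rt.dist ∧
    X ∈ 𝒳 ∧ D ∈ 𝒟 ∧ SMonic 𝒟 f ∧ SEpic 𝒟 g}

/-- `(𝒳, 𝒴)` is a `𝒟`-mutation pair. -/
def IsMutationPair (𝒳 𝒴 𝒟 : Set C) : Prop :=
  muInvSet rt 𝒳 𝒟 = 𝒴 ∧ muSet rt 𝒴 𝒟 = 𝒳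

/-- `𝒵` is extension-closed. -/
def ExtClosed (𝒵 : Set C) : Prop :=
  ∀ t ∈ rt.dist, t.obj₁ ∈ 𝒵 → t.obj₃ ∈ 𝒵 → t.obj₂ ∈ 𝒵

end Mutation

section Approximations

variable {S : Set C} {X Y Z : C}

lemma SMonic.comp {f : X ⟶ Y} {g : Y ⟶ Z} (hf : SMonic S f) (hg : SMonic S g) :
    SMonic S (f ≫ g) := by
  intro D hD u
  obtain ⟨v, hv⟩ := hf D hD u
  obtain ⟨w, hw⟩ := hg D hD v
  exact ⟨w, by rw [Category.assoc, hw, hv]⟩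

lemma SEpic.of_comp {f : X ⟶ Y} {g : Y ⟶ Z} (h : SEpic S (f ≫ g)) : SEpic S g := by
  intro D hD u
  obtain ⟨v, hv⟩ := h D hD u
  exact ⟨v ≫ f, by rw [Category.assoc, hv]⟩

lemma IsSubcat.mem_of_isZero [Preadditive C] [HasFiniteBiproducts C] (hS : IsSubcat S)
    (hX : X ∈ S) (hY : IsZero Y) : Y ∈ S :=
  hS.2.2 0 0 (hY.eq_of_src _ _) hX

end Approximations

namespace RightTriangulated

open ZeroObject

variable [Preadditive C] [HasZeroObject C] [HasFiniteBiproducts C] {T : C ⥤ C}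
  {rt : RightTriangulated T} {t : RightTriangle C T}

variable (rt) in
lemma id_mem_dist (A : C) :
    (⟨A, A, T.obj 0, 𝟙 A, 0, 0⟩ : RightTriangle C T) ∈ rt.dist := by
  have := rt.shift_additive
  simpa using rt.tr3 _ (rt.tr1 A)

lemma mor₁_comp_mor₂ (ht : t ∈ rt.dist) : t.mor₁ ≫ t.mor₂ = 0 := by
  obtain ⟨c, hc, -⟩ := rt.tr4 _ (rt.id_mem_dist t.obj₁) _ ht (𝟙 t.obj₁) t.mor₁ (by simp)
  simpa using hc.symm

lemma mor₃_comp_map_mor₁ (ht : t ∈ rt.dist) : t.mor₃ ≫ T.map t.mor₁ = 0 := by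
  have := rt.shift_additive
  simpa using mor₁_comp_mor₂ (rt.tr3 _ (rt.tr3 _ ht))

lemma exists_mor₂_comp (ht : t ∈ rt.dist) {X : C} (u : t.obj₂ ⟶ X) (hu : t.mor₁ ≫ u = 0) :
    ∃ w : t.obj₃ ⟶ X, t.mor₂ ≫ w = u := by
  obtain ⟨w, hw, -⟩ := rt.tr4 _ ht _ (rt.tr1 X) 0 u (by simp [hu])
  exact ⟨w, by simpa using hw⟩

lemma mor₃_eq_zero_of_isSplitMono (ht : t ∈ rt.dist) [IsSplitMono t.mor₁] : t.mor₃ = 0 :=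
  calc t.mor₃ = t.mor₃ ≫ T.map t.mor₁ ≫ T.map (retraction t.mor₁) := by
        rw [← T.map_comp, IsSplitMono.id, T.map_id, Category.comp_id]
    _ = 0 := by rw [← Category.assoc, mor₃_comp_map_mor₁ ht, zero_comp]

lemma isIso_of_mor₂_comp_eq_of_comp_mor₃_eq (ht : t ∈ rt.dist) (e : t.obj₃ ⟶ t.obj₃)
    (he₂ : t.mor₂ ≫ e = t.mor₂) (he₃ : e ≫ t.mor₃ = t.mor₃) : IsIso e := by
  set d := e - 𝟙 t.obj₃
  obtain ⟨w, hw⟩ := exists_mor₂_comp (rt.tr3 _ ht) d (by simp [d, he₂])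
  -- `d` factors through `t.mor₃` and kills it, so `e = 𝟙 + d` with `d ≫ d = 0`.
  have hdd : d ≫ d = 0 := by
    have hd₃ : d ≫ t.mor₃ = 0 := by simp [d, he₃]
    have hw : t.mor₃ ≫ w = d := hw
    calc d ≫ d = (d ≫ t.mor₃) ≫ w := by rw [Category.assoc, hw]
      _ = 0 := by rw [hd₃, zero_comp]
  have he : e = 𝟙 _ + d := by simp [d]
  refine ⟨𝟙 _ - d, ?_, ?_⟩ <;> simp [he, hdd]

lemma isSplitEpi_mor₂_of_isSplitMono (ht : t ∈ rt.dist) [IsSplitMono t.mor₁] :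
    IsSplitEpi t.mor₂ := by
  obtain ⟨c, hc⟩ := exists_mor₂_comp ht (𝟙 _ - retraction t.mor₁ ≫ t.mor₁) (by simp)
  have : IsIso (c ≫ t.mor₂) := by
    refine isIso_of_mor₂_comp_eq_of_comp_mor₃_eq ht _ ?_ (by simp [mor₃_eq_zero_of_isSplitMono ht])
    rw [← Category.assoc, hc]
    simp [mor₁_comp_mor₂ ht]
  exact ⟨⟨inv (c ≫ t.mor₂) ≫ c, by simp⟩⟩

lemma exists_retraction_of_mor₁_retract {M D B W Q : C} {ν : M ⟶ D} {g : D ⟶ W}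
    {h : W ⟶ T.obj M} {f : M ⟶ B} {g' : B ⟶ Q} {h' : Q ⟶ T.obj M}
    (ht : (⟨M, D, W, ν, g, h⟩ : RightTriangle C T) ∈ rt.dist)
    (ht' : (⟨M, B, Q, f, g', h'⟩ : RightTriangle C T) ∈ rt.dist)
    (a : D ⟶ B) (b : B ⟶ D) (hab : a ≫ b = 𝟙 D) (ha : ν ≫ a = f) (hb : f ≫ b = ν) :
    ∃ (s : W ⟶ Q) (r : Q ⟶ W), s ≫ r = 𝟙 W := by
  obtain ⟨s, hs₂, hs₃⟩ : ∃ s : W ⟶ Q, g ≫ s = a ≫ g' ∧ h ≫ T.map (𝟙 M) = s ≫ h' :=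
    rt.tr4 _ ht _ ht' (𝟙 M) a (by simp [ha])
  obtain ⟨r, hr₂, hr₃⟩ : ∃ r : Q ⟶ W, g' ≫ r = b ≫ g ∧ h' ≫ T.map (𝟙 M) = r ≫ h :=
    rt.tr4 _ ht' _ ht (𝟙 M) b (by simp [hb])
  rw [T.map_id, Category.comp_id] at hs₃ hr₃
  have : IsIso (s ≫ r) := isIso_of_mor₂_comp_eq_of_comp_mor₃_eq ht _
    (by dsimp only; rw [reassoc_of% hs₂, hr₂, reassoc_of% hab])
    (by dsimp only; rw [Category.assoc, ← hr₃, hs₃])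
  exact ⟨s, r ≫ inv (s ≫ r), by rw [← Category.assoc, IsIso.hom_inv_id]⟩

lemma sMonic_of_triangle_morphism {S : Set C} {M N P D W : C} {μ : M ⟶ N} {γ : N ⟶ P}
    {φ : P ⟶ T.obj M} {f : N ⟶ D} {g : D ⟶ W} {h : W ⟶ T.obj M} {l : P ⟶ W}
    (ht : (⟨M, N, P, μ, γ, φ⟩ : RightTriangle C T) ∈ rt.dist)
    (ht' : (⟨M, D, W, μ ≫ f, g, h⟩ : RightTriangle C T) ∈ rt.dist)
    (hf : SMonic S f) (hγ : γ ≫ l = f ≫ g) (hφ : l ≫ h = φ) : SMonic S l := by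
  intro D' hD' u
  have hμγ : μ ≫ γ = 0 := mor₁_comp_mor₂ ht
  obtain ⟨v, hv⟩ := hf D' hD' (γ ≫ u)
  obtain ⟨y, hy⟩ : ∃ y : W ⟶ D', g ≫ y = v := exists_mor₂_comp ht' v
    (by dsimp only; rw [Category.assoc, hv, reassoc_of% hμγ, zero_comp])
  obtain ⟨z, hz⟩ : ∃ z : T.obj M ⟶ D', φ ≫ z = u - l ≫ y := exists_mor₂_comp (rt.tr3 _ ht) _
    (by dsimp only; rw [Preadditive.comp_sub, reassoc_of% hγ, hy, hv, sub_self])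
  refine ⟨y + h ≫ z, ?_⟩
  rw [Preadditive.comp_add, reassoc_of% hφ, hz, add_sub_cancel]

end RightTriangulated

namespace Assumption210

open RightTriangulated

variable [Preadditive C] [HasZeroObject C] [HasFiniteBiproducts C] {T : C ⥤ C}
  {rt : RightTriangulated T}

-- Rotating back the triangle `X ⟶ Y ⟶ Z ⟶ TX` of a map `ζ` with `T ζ = 0` makes `Y ⟶ Z` split mono.
lemma faithful (h210 : Assumption210 rt) : T.Faithful := by
  have := rt.shift_additive
  suffices h : ∀ {X Y : C} (ζ : X ⟶ Y), T.map ζ = 0 → ζ = 0 from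
    ⟨fun {_ _ f g} hfg => sub_eq_zero.mp (h _ (by rw [T.map_sub, hfg, sub_self]))⟩
  intro X Y ζ hζ
  obtain ⟨Z, p, q, ht⟩ := rt.tr2 ζ
  obtain ⟨ω, hω⟩ := exists_mor₂_comp (h210 0 p q (by simpa [hζ] using rt.tr3 _ ht)) (𝟙 Y)
    (by simp)
  calc ζ = ζ ≫ p ≫ ω := by rw [hω, Category.comp_id]
    _ = 0 := by rw [← Category.assoc, mor₁_comp_mor₂ ht, zero_comp]

/- The octahedron on `p ≫ w = t.mor₂`, with `p` the cone of `v`, gives `l : T D ⟶ T t.obj₁` with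
`l ≫ T t.mor₁ = T v`; `l` is `T x` because `𝒟` is factor-through-epic, and `T` is faithful. -/
lemma exists_comp_mor₁ (h210 : Assumption210 rt) {𝒟 : Set C} (hfte : FactorThroughEpic T 𝒟)
    {t : RightTriangle C T} (ht : t ∈ rt.dist) {D : C} (hD : D ∈ 𝒟) (v : D ⟶ t.obj₂)
    (hv : v ≫ t.mor₂ = 0) : ∃ x : D ⟶ t.obj₁, x ≫ t.mor₁ = v := by
  have := rt.shift_additive
  have := h210.faithful
  obtain ⟨E, p, q, htv⟩ := rt.tr2 v
  obtain ⟨w, hw⟩ := exists_mor₂_comp htv t.mor₂ hv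
  obtain ⟨F, r, s, htw⟩ := rt.tr2 w
  have htpw : (⟨t.obj₂, t.obj₃, T.obj t.obj₁, p ≫ w, t.mor₃, -T.map t.mor₁⟩ :
      RightTriangle C T) ∈ rt.dist := by
    rw [hw]; exact rt.tr3 _ ht
  obtain ⟨l, -, -, hl, -⟩ :=
    rt.tr5 p q (-T.map v) w r s t.mor₃ (-T.map t.mor₁) (rt.tr3 _ htv) htw htpw
  obtain ⟨x, -, hx⟩ := hfte 0 D t.obj₁ l ⟨T.obj D, ⟨D, hD, rfl⟩, 𝟙 _, l, Category.id_comp l⟩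
  refine ⟨x, T.map_injective ?_⟩
  rw [T.map_comp, hx, ← neg_inj, ← Preadditive.comp_neg, hl]

lemma sEpic_of_comm_sq (h210 : Assumption210 rt) {𝒟 : Set C} (hfte : FactorThroughEpic T 𝒟)
    {W D Y E Y' : C} {i : W ⟶ Y} {f : W ⟶ D} {β : D ⟶ E} {g : D ⟶ Y'} {l : Y ⟶ E}
    {j : E ⟶ Y'} {δ : Y' ⟶ T.obj Y}
    (ht : (⟨Y, E, Y', l, j, δ⟩ : RightTriangle C T) ∈ rt.dist) (hi : SEpic 𝒟 i)
    (hg : SEpic 𝒟 g) (hsq : i ≫ l = f ≫ β) (hβ : β ≫ j = g) : SEpic 𝒟 β := by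
  intro D' hD' u
  obtain ⟨v, hv⟩ := hg D' hD' (u ≫ j)
  obtain ⟨x, hx⟩ := h210.exists_comp_mor₁ hfte ht hD' (u - v ≫ β)
    (by simp only [Preadditive.sub_comp, Category.assoc, hβ, hv, sub_self])
  obtain ⟨y, rfl⟩ := hi D' hD' x
  refine ⟨v + y ≫ f, ?_⟩
  calc (v + y ≫ f) ≫ β = v ≫ β + y ≫ i ≫ l := by
        rw [Preadditive.add_comp, Category.assoc, ← hsq]
    _ = u := by rw [← Category.assoc, hx, add_sub_cancel]

end Assumption210

section Mutation

open RightTriangulated ZeroObject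

variable [Preadditive C] [HasZeroObject C] [HasFiniteBiproducts C] {T : C ⥤ C}
  {rt : RightTriangulated T} {𝒟 𝒵 : Set C}

lemma exists_approx_triangle (hsub𝒵 : IsSubcat 𝒵) (hmu : muSet rt 𝒵 𝒟 = 𝒵) {X : C}
    (hX : X ∈ 𝒵) :
    ∃ (D Y : C) (f : X ⟶ D) (g : D ⟶ Y) (h : Y ⟶ T.obj X),
      (⟨X, D, Y, f, g, h⟩ : RightTriangle C T) ∈ rt.dist ∧
      D ∈ 𝒟 ∧ Y ∈ 𝒵 ∧ SMonic 𝒟 f ∧ SEpic 𝒟 g := by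
  have := rt.shift_additive
  have hT0 : IsZero (T.obj 0) := T.map_isZero (isZero_zero C)
  rcases hmu ▸ hX with hXD | hX
  · exact ⟨X, T.obj 0, 𝟙 X, 0, 0, rt.id_mem_dist X, hXD, hsub𝒵.mem_of_isZero hX hT0,
      fun _ _ u => ⟨u, Category.id_comp u⟩, fun _ _ _ => ⟨0, hT0.eq_of_tgt _ _⟩⟩
  · exact hX

lemma cone_biprod_lift_mem (hsub𝒵 : IsSubcat 𝒵) (hext : ExtClosed rt 𝒵) {M D D' Y Q : C}
    {f : M ⟶ D} {g : D ⟶ Y} {h : Y ⟶ T.obj M}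
    (ht : (⟨M, D, Y, f, g, h⟩ : RightTriangle C T) ∈ rt.dist) (hD : D ∈ 𝒵) (hD' : D' ∈ 𝒵)
    (hY : Y ∈ 𝒵) (σ : D ⟶ D') {g' : D ⊞ D' ⟶ Q} {h' : Q ⟶ T.obj M}
    (htQ : (⟨M, D ⊞ D', Q, biprod.lift f (f ≫ σ), g', h'⟩ : RightTriangle C T) ∈ rt.dist) :
    Q ∈ 𝒵 := by
  obtain ⟨K, gK, hK, htK⟩ := rt.tr2 (biprod.lift (𝟙 D) σ)
  have htQ' : (⟨M, D ⊞ D', Q, f ≫ biprod.lift (𝟙 D) σ, g', h'⟩ : RightTriangle C T) ∈ rt.dist := by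
    convert htQ using 3
    ext <;> simp
  obtain ⟨_, _, -, -, -, -, htYQK⟩ := rt.tr5 f g h _ gK hK g' h' ht htK htQ'
  have : IsSplitMono (biprod.lift (𝟙 D) σ) := .mk' ⟨biprod.fst, by simp⟩
  have : IsSplitEpi gK := isSplitEpi_mor₂_of_isSplitMono htK
  exact hext _ htYQK hY (hsub𝒵.2.2 (section_ gK) gK (IsSplitEpi.id gK) (hsub𝒵.2.1 hD hD'))

lemma cone_mem_of_sMonic (hsub𝒵 : IsSubcat 𝒵) (h𝒟𝒵 : 𝒟 ⊆ 𝒵) (hext : ExtClosed rt 𝒵)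
    {M D Y D₀ W : C} {f : M ⟶ D} {g : D ⟶ Y} {h : Y ⟶ T.obj M}
    (ht : (⟨M, D, Y, f, g, h⟩ : RightTriangle C T) ∈ rt.dist) (hD : D ∈ 𝒟) (hY : Y ∈ 𝒵)
    (hf : SMonic 𝒟 f) (hD₀ : D₀ ∈ 𝒟) {ν : M ⟶ D₀} {g' : D₀ ⟶ W} {h' : W ⟶ T.obj M}
    (hν : SMonic 𝒟 ν) (htW : (⟨M, D₀, W, ν, g', h'⟩ : RightTriangle C T) ∈ rt.dist) :
    W ∈ 𝒵 := by
  obtain ⟨σ, rfl⟩ := hf D₀ hD₀ ν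
  obtain ⟨τ, hτ⟩ := hν D hD f
  rw [Category.assoc] at hτ
  obtain ⟨Q, gQ, hQ, htQ⟩ := rt.tr2 (biprod.lift f (f ≫ σ))
  obtain ⟨s, r, hsr⟩ := exists_retraction_of_mor₁_retract htW htQ (biprod.lift τ (𝟙 D₀))
    biprod.snd (by simp) (by ext <;> simp [hτ]) (by simp)
  exact hsub𝒵.2.2 s r hsr (cone_biprod_lift_mem hsub𝒵 hext ht (h𝒟𝒵 hD) (h𝒟𝒵 hD₀) hY σ htQ)

end Mutation

theorem cone_mem_of_dMonic_general {C : Type u} [Category.{v} C] [Preadditive C]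
    [HasZeroObject C] [HasFiniteBiproducts C] {T : C ⥤ C} (rt : RightTriangulated T)
    (h210 : Assumption210 rt)
    (𝒟 𝒵 : Set C) (hsub𝒵 : IsSubcat 𝒵) (h𝒟𝒵 : 𝒟 ⊆ 𝒵)
    (hfte : FactorThroughEpic T 𝒟) (hext : ExtClosed rt 𝒵)
    (hmu : muSet rt 𝒵 𝒟 = 𝒵)
    {M N P : C} (hM : M ∈ 𝒵) (hN : N ∈ 𝒵)
    (μ : M ⟶ N) (γ : N ⟶ P) (φ : P ⟶ T.obj M)
    (hμ : SMonic 𝒟 μ)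
    (ht : (⟨M, N, P, μ, γ, φ⟩ : RightTriangle C T) ∈ rt.dist) :
    P ∈ 𝒵 := by
  obtain ⟨DM, YM, fM, gM, hM', htM, hDM, hYM, hfM, -⟩ :=
    exists_approx_triangle hsub𝒵 hmu hM
  obtain ⟨DN, YN, fN, gN, hN', htN, hDN, hYN, hfN, hgN⟩ :=
    exists_approx_triangle hsub𝒵 hmu hN
  obtain ⟨W, g', h', htW⟩ := rt.tr2 (μ ≫ fN)
  have hW : W ∈ 𝒵 := cone_mem_of_sMonic hsub𝒵 h𝒟𝒵 hext htM hDM hYM hfM hDN (hμ.comp hfN) htW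
  obtain ⟨l, i, hγl, hlφ, hgi, -, htl⟩ := rt.tr5 μ γ φ fN gN hN' g' h' ht htN htW
  obtain ⟨DW, YW, fW, gW, hW', htW', hDW, hYW, hfW, hgW⟩ :=
    exists_approx_triangle hsub𝒵 hmu hW
  obtain ⟨E, β, δ, htE⟩ := rt.tr2 (l ≫ fW)
  obtain ⟨lE, iE, hsq, -, hβ, -, htYEY⟩ := rt.tr5 l i _ fW gW hW' β δ htl htW' htE
  have hl : SMonic 𝒟 l := RightTriangulated.sMonic_of_triangle_morphism ht htW hfN hγl hlφ
  have hβ : SEpic 𝒟 β := h210.sEpic_of_comm_sq hfte htYEY (hgi ▸ hgN).of_comp hgW hsq hβ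
  rw [← hmu]
  exact Or.inr ⟨DW, E, l ≫ fW, β, δ, htE, hDW, hext _ htYEY hYN hYW, hl.comp hfW, hβ⟩

/-- Corollary 3.10: under the hypotheses making `𝒵/𝒟` right triangulated, if
`μ : M ⟶ N` is `𝒟`-monic with `M, N ∈ 𝒵` and `M ⟶μ N ⟶γ P ⟶φ TM` is a right
triangle in `C`, then `P ∈ 𝒵`. -/
theorem cone_mem_of_dMonic {C : Type u} [Category.{v} C] [Preadditive C]
    [HasZeroObject C] [HasFiniteBiproducts C] {T : C ⥤ C} (rt : RightTriangulated T)
    (h210 : Assumption210 rt)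
    (𝒟 𝒵 : Set C) (hsub𝒟 : IsSubcat 𝒟) (hsub𝒵 : IsSubcat 𝒵) (h𝒟𝒵 : 𝒟 ⊆ 𝒵)
    (hfte : FactorThroughEpic T 𝒟) (hext : ExtClosed rt 𝒵)
    (hmu : muSet rt 𝒵 𝒟 = 𝒵)
    {M N P : C} (hM : M ∈ 𝒵) (hN : N ∈ 𝒵)
    (μ : M ⟶ N) (γ : N ⟶ P) (φ : P ⟶ T.obj M)
    (hμ : SMonic 𝒟 μ)
    (ht : (⟨M, N, P, μ, γ, φ⟩ : RightTriangle C T) ∈ rt.dist) :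
    P ∈ 𝒵 :=
  cone_mem_of_dMonic_general rt h210 𝒟 𝒵 hsub𝒵 h𝒟𝒵 hfte hext hmu hM hN μ γ φ hμ ht
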